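/- Let n, s ≥ 1 and ε_1,…,ε_n ∈ [0,1/4] with average ε := (1/n)·∑_{i=1}^n ε_i. Let P be the 2n-partite binary box P(x,y|u,v) = ∏_{i=1}^n P_{ε_i}(x_i,y_i|u_i,v_i), and fix an input (u,v) ∈ ({0,1}^n)². For an s×n matrix A over GF(2) and x ∈ {0,1}^n let A⊙x ∈ {0,1}^s denote the matrix-vector product mod 2. Then for every assignment to each s×n matrix A over GF(2) of a box partition {(p^{A,z}, P^{A,z})}_{z∈𝒵_A} of P into 2n-partite binary boxes: 2^{−sn} · ∑_{A} (1/2) · ∑_{σ∈{0,1}^s} ∑_{z∈𝒵_A} p^{A,z} · |∑_{(x,y) : A⊙x = σ} P^{A,z}(x,y|u,v) − 2^{−s}| ≤ (1/2)·2^{s}·((1+4ε)/2)^n. (The s-bit key obtained by applying a uniformly random linear hash A to Alice's outputs has distance from uniform at most (1/2)·2^s·((1+4ε)/2)^n from any non-signaling adversary's point of view.) -/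

import Mathlib

open Finset

/-- A `2n`-partite binary box: nonnegative, normalized, and non-signaling at every one of
the `2n` interfaces. -/
def NSBox (n : ℕ)
    (P : (Fin n → Bool) → (Fin n → Bool) → (Fin n → Bool) → (Fin n → Bool) → ℝ) : Prop :=
  (∀ x y u v, 0 ≤ P x y u v) ∧
  (∀ u v, ∑ x, ∑ y, P x y u v = 1) ∧
  (∀ x y u v (i : Fin n) (b : Bool),
    ∑ c : Bool, P (Function.update x i c) y u v
      = ∑ c : Bool, P (Function.update x i c) y (Function.update u i b) v) ∧
  (∀ x y u v (i : Fin n) (b : Bool),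
    ∑ c : Bool, P x (Function.update y i c) u v
      = ∑ c : Bool, P x (Function.update y i c) u (Function.update v i b))

/-- The unbiased box with error `ε`. -/
noncomputable def Peps (ε : ℝ) (x y u v : Bool) : ℝ :=
  if xor x y = (u && v) then (1 - ε) / 2 else ε / 2

/-- The matrix-vector product over GF(2), with matrices and vectors encoded via `Bool`:
`(A ⊙ x) r = ⊕_i A_{r,i}·x_i`. -/
def matVec {s n : ℕ} (A : Fin s → Fin n → Bool) (x : Fin n → Bool) : Fin s → Bool :=
  fun r => decide ((Finset.univ.filter fun i => (A r i && x i) = true).card % 2 = 1)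

noncomputable def sg (b : Bool) : ℝ := if b then -1 else 1

lemma sg_mul_self (b : Bool) : sg b * sg b = 1 := by cases b <;> simp [sg]

lemma abs_sg (b : Bool) : |sg b| = 1 := by cases b <;> simp [sg]

/-- generic "insert a coordinate" function -/
def insF {ι V : Type*} [DecidableEq ι] (j : ι) (c : V) (g : {i // i ≠ j} → V) : ι → V :=
  fun i => if h : i = j then c else g ⟨i, h⟩

@[simp] lemma insF_self {ι V : Type*} [DecidableEq ι] (j : ι) (c : V) (g : {i // i ≠ j} → V) :
    insF j c g j = c := by simp [insF]

lemma insF_ne {ι V : Type*} [DecidableEq ι] (j : ι) (c : V) (g : {i // i ≠ j} → V)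
    {i : ι} (h : i ≠ j) : insF j c g i = g ⟨i, h⟩ := by simp [insF, h]

lemma update_insF {ι V : Type*} [DecidableEq ι] (j : ι) (c c' : V) (g : {i // i ≠ j} → V) :
    Function.update (insF j c g) j c' = insF j c' g := by
  funext i
  by_cases h : i = j
  · subst h; simp
  · simp [Function.update, h, insF_ne j _ _ h]

def insEquiv {ι V : Type*} [DecidableEq ι] (j : ι) : (V × ({i // i ≠ j} → V)) ≃ (ι → V) where
  toFun p := insF j p.1 p.2
  invFun x := (x j, fun i => x i.1)
  left_inv := by
    rintro ⟨c, g⟩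
    refine Prod.ext (by simp) ?_
    funext i
    simp [insF_ne j c g i.2]
  right_inv := by
    intro x
    funext i
    by_cases h : i = j
    · subst h; simp
    · simp [insF_ne j _ _ h]

lemma sum_split {ι V : Type*} [DecidableEq ι] [Fintype ι] [Fintype V] [DecidableEq V]
    (j : ι) (f : (ι → V) → ℝ) :
    ∑ x, f x = ∑ c : V, ∑ g : {i // i ≠ j} → V, f (insF j c g) := by
  rw [← Equiv.sum_comp (insEquiv (V := V) j) f, Fintype.sum_prod_type]
  rfl

/-- summing a function of `x` composed with update over all x and the updated value -/
lemma sum_update {ι V : Type*} [DecidableEq ι] [Fintype ι] [Fintype V] [DecidableEq V]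
    (j : ι) (f : (ι → V) → ℝ) :
    ∑ c : V, ∑ x : ι → V, f (Function.update x j c) = (Fintype.card V : ℝ) * ∑ x, f x := by
  have h1 : ∀ c : V, ∑ x : ι → V, f (Function.update x j c)
      = (Fintype.card V : ℝ) * ∑ g : {i // i ≠ j} → V, f (insF j c g) := by
    intro c
    rw [sum_split j (fun x => f (Function.update x j c))]
    simp only [update_insF]
    rw [Finset.sum_const, Finset.card_univ, nsmul_eq_mul]
  simp only [h1, ← Finset.mul_sum]
  rw [← sum_split j f]


set_option maxHeartbeats 1000000 in
lemma single_box (T : Bool → Bool → Bool → Bool → ℝ)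
    (hpos : ∀ c d a b, 0 ≤ T c d a b)
    (hA : ∀ d b a a', ∑ c, T c d a b = ∑ c, T c d a' b)
    (hB : ∀ c a b b', ∑ d, T c d a b = ∑ d, T c d a b')
    (a0 b0 : Bool) :
    |∑ c, ∑ d, sg c * T c d a0 b0|
      ≤ ∑ a, ∑ b, ∑ c, ∑ d, (if xor c d ≠ (a && b) then T c d a b else 0) := by
  have h1 := fun d b => hA d b true false
  have h2 := fun c a => hB c a true false
  simp only [Fintype.sum_bool] at h1 h2 ⊢
  have e1 := h1 true true; have e2 := h1 true false
  have e3 := h1 false true; have e4 := h1 false false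
  have f1 := h2 true true; have f2 := h2 true false
  have f3 := h2 false true; have f4 := h2 false false
  rw [abs_le]
  norm_num [sg]
  constructor <;>
  · cases a0 <;> cases b0 <;>
    · linarith [hpos true true true true, hpos true false true true, hpos false true true true,
        hpos false false true true, hpos true true true false, hpos true false true false,
        hpos false true true false, hpos false false true false, hpos true true false true,
        hpos true false false true, hpos false true false true, hpos false false false true,
        hpos true true false false, hpos true false false false, hpos false true false false,
        hpos false false false false]


abbrev BoxT (n : ℕ) := (Fin n → Bool) → (Fin n → Bool) → (Fin n → Bool) → (Fin n → Bool) → ℝ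

def NSC (n : ℕ) (R : BoxT n) : Prop :=
  (∀ x y u v, 0 ≤ R x y u v) ∧
  (∀ x y u v (i : Fin n) (b : Bool),
    ∑ c : Bool, R (Function.update x i c) y u v
      = ∑ c : Bool, R (Function.update x i c) y (Function.update u i b) v) ∧
  (∀ x y u v (i : Fin n) (b : Bool),
    ∑ c : Bool, R x (Function.update y i c) u v
      = ∑ c : Bool, R x (Function.update y i c) u (Function.update v i b))

noncomputable def bias {n : ℕ} (S : Finset (Fin n)) (R : BoxT n) (u v : Fin n → Bool) : ℝ :=
  ∑ x, ∑ y, (∏ i ∈ S, sg (x i)) * R x y u v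

noncomputable def lam {n : ℕ} (S : Finset (Fin n)) (R : BoxT n) (u v : Fin n → Bool) : ℝ :=
  ∑ x, ∑ y, ∑ a, ∑ b,
    if (∀ i, i ∉ S → (a i = u i ∧ b i = v i)) ∧ (∀ i ∈ S, ¬ (xor (x i) (y i) = (a i && b i)))
    then R x y a b else 0

def Rpin {n : ℕ} (R : BoxT n) (j : Fin n) (c d a b : Bool) : BoxT n :=
  fun x y u' v' => R (Function.update x j c) (Function.update y j d)
    (Function.update u' j a) (Function.update v' j b)

lemma NSC_pin {n : ℕ} {R : BoxT n} (hR : NSC n R) (j : Fin n) (c d a b : Bool) :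
    NSC n (Rpin R j c d a b) := by
  obtain ⟨h0, hA, hB⟩ := hR
  refine ⟨fun x y u v => h0 _ _ _ _, ?_, ?_⟩
  · intro x y u' v' i b'
    by_cases hij : i = j
    · subst hij
      simp only [Rpin, Function.update_idem]
    · simp only [Rpin, Function.update_comm hij]
      exact hA _ _ _ _ i b'
  · intro x y u' v' i b'
    by_cases hij : i = j
    · subst hij
      simp only [Rpin, Function.update_idem]
    · simp only [Rpin, Function.update_comm hij]
      exact hB _ _ _ _ i b'

lemma bias_insert {n : ℕ} (j : Fin n) (S' : Finset (Fin n)) (hj : j ∉ S') (R : BoxT n)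
    (u v : Fin n → Bool) :
    bias (insert j S') R u v
      = (1/4) * ∑ c : Bool, ∑ d : Bool, sg c * bias S' (Rpin R j c d (u j) (v j)) u v := by
  classical
  set G : (Fin n → Bool) → (Fin n → Bool) → ℝ :=
    fun X Y => (sg (X j) * ∏ i ∈ S', sg (X i)) * R X Y u v with hG
  have h1 : ∑ c : Bool, ∑ d : Bool, sg c * bias S' (Rpin R j c d (u j) (v j)) u v
      = ∑ c : Bool, ∑ x, ∑ d : Bool, ∑ y, G (Function.update x j c) (Function.update y j d) := by
    refine Finset.sum_congr rfl fun c _ => ?_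
    rw [← Finset.sum_comm]
    refine Finset.sum_congr rfl fun d _ => ?_
    rw [bias, Finset.mul_sum]
    refine Finset.sum_congr rfl fun x _ => ?_
    rw [Finset.mul_sum]
    refine Finset.sum_congr rfl fun y _ => ?_
    simp only [Rpin, Function.update_eq_self, hG, Function.update_self]
    have : ∏ i ∈ S', sg (Function.update x j c i) = ∏ i ∈ S', sg (x i) := by
      refine Finset.prod_congr rfl fun i hi => ?_
      rw [Function.update_of_ne (ne_of_mem_of_not_mem hi hj)]
    rw [this]; ring
  have h2 : ∀ X, ∑ d : Bool, ∑ y, G X (Function.update y j d) = 2 * ∑ y, G X y := by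
    intro X; simpa using sum_update j (fun Y => G X Y)
  have h3 : ∑ c : Bool, ∑ x, (∑ y, G (Function.update x j c) y) = 2 * ∑ x, ∑ y, G x y := by
    simpa using sum_update j (fun X => ∑ y, G X y)
  rw [h1]
  simp only [h2]
  simp only [← Finset.mul_sum]
  rw [h3, bias]
  have hins : ∀ x : Fin n → Bool, ∀ y : Fin n → Bool,
      (∏ i ∈ insert j S', sg (x i)) * R x y u v = G x y := by
    intro x y
    rw [Finset.prod_insert hj, hG]
  simp only [hins]
  ring


/-- the induction-friendly condition on the restricted variables -/
abbrev CONDg {n : ℕ} (j : Fin n) (S' : Finset (Fin n)) (u v : Fin n → Bool)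
    (gx gy ga gb : {i : Fin n // i ≠ j} → Bool) : Prop :=
  (∀ i : {i : Fin n // i ≠ j}, i.1 ∉ S' → (ga i = u i.1 ∧ gb i = v i.1)) ∧
  (∀ i : {i : Fin n // i ≠ j}, i.1 ∈ S' → ¬ (xor (gx i) (gy i) = (ga i && gb i)))

noncomputable def Canon {n : ℕ} (j : Fin n) (S' : Finset (Fin n)) (R : BoxT n)
    (u v : Fin n → Bool) (c d α β : Bool) : ℝ :=
  ∑ gx : {i : Fin n // i ≠ j} → Bool, ∑ gy, ∑ ga, ∑ gb,
    if CONDg j S' u v gx gy ga gb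
    then R (insF j c gx) (insF j d gy) (insF j α ga) (insF j β gb) else 0

lemma sum_split4 {n : ℕ} (j : Fin n)
    (F : (Fin n → Bool) → (Fin n → Bool) → (Fin n → Bool) → (Fin n → Bool) → ℝ) :
    ∑ x, ∑ y, ∑ a, ∑ b, F x y a b
      = ∑ c : Bool, ∑ gx : {i : Fin n // i ≠ j} → Bool, ∑ d : Bool, ∑ gy,
          ∑ α : Bool, ∑ ga, ∑ β : Bool, ∑ gb,
          F (insF j c gx) (insF j d gy) (insF j α ga) (insF j β gb) := by
  rw [sum_split j (fun x => ∑ y, ∑ a, ∑ b, F x y a b)]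
  refine Finset.sum_congr rfl fun c _ => Finset.sum_congr rfl fun gx _ => ?_
  rw [sum_split j (fun y => ∑ a, ∑ b, F (insF j c gx) y a b)]
  refine Finset.sum_congr rfl fun d _ => Finset.sum_congr rfl fun gy _ => ?_
  rw [sum_split j (fun a => ∑ b, F (insF j c gx) (insF j d gy) a b)]
  refine Finset.sum_congr rfl fun α _ => Finset.sum_congr rfl fun ga _ => ?_
  rw [sum_split j (fun b => F (insF j c gx) (insF j d gy) (insF j α ga) b)]

lemma sum_if_pull {G : Type*} [Fintype G] (P : Prop) [Decidable P] (f : G → ℝ) :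
    (∑ g, if P then f g else 0) = if P then ∑ g, f g else 0 := by split_ifs <;> simp

lemma sum_boolPin {G : Type*} [Fintype G] (w : Bool) (f : G → ℝ) :
    (∑ b : Bool, ∑ g : G, if b = w then f g else 0) = ∑ g, f g := by
  rw [Fintype.sum_bool]; cases w <;> simp

lemma sum_boolConst {G : Type*} [Fintype G] (f : G → ℝ) :
    (∑ _b : Bool, ∑ g : G, f g) = 2 * ∑ g, f g := by rw [Fintype.sum_bool]; ring

set_option maxHeartbeats 800000 in
lemma lam_pin {n : ℕ} (j : Fin n) (S' : Finset (Fin n)) (hj : j ∉ S') (R : BoxT n)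
    (u v : Fin n → Bool) (c d α β : Bool) :
    lam S' (Rpin R j c d α β) u v = 4 * Canon j S' R u v c d α β := by
  classical
  rw [lam, sum_split4 j]
  have point : ∀ (c' d' α' β' : Bool) (gx gy ga gb : {i : Fin n // i ≠ j} → Bool),
      (if (∀ i, i ∉ S' → ((insF j α' ga) i = u i ∧ (insF j β' gb) i = v i)) ∧
          (∀ i ∈ S', ¬ (xor ((insF j c' gx) i) ((insF j d' gy) i)
            = ((insF j α' ga) i && (insF j β' gb) i)))
       then Rpin R j c d α β (insF j c' gx) (insF j d' gy) (insF j α' ga) (insF j β' gb) else 0)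
      = (if β' = v j then if α' = u j then
          (if CONDg j S' u v gx gy ga gb
           then R (insF j c gx) (insF j d gy) (insF j α ga) (insF j β gb) else 0)
          else 0 else 0) := by
    intro c' d' α' β' gx gy ga gb
    have hbox : Rpin R j c d α β (insF j c' gx) (insF j d' gy) (insF j α' ga) (insF j β' gb)
        = R (insF j c gx) (insF j d gy) (insF j α ga) (insF j β gb) := by
      simp only [Rpin, update_insF]
    have hiff : ((∀ i, i ∉ S' → ((insF j α' ga) i = u i ∧ (insF j β' gb) i = v i)) ∧
          (∀ i ∈ S', ¬ (xor ((insF j c' gx) i) ((insF j d' gy) i)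
            = ((insF j α' ga) i && (insF j β' gb) i))))
        ↔ (β' = v j ∧ (α' = u j ∧ CONDg j S' u v gx gy ga gb)) := by
      constructor
      · rintro ⟨h1, h2⟩
        have hj1 := h1 j hj
        rw [insF_self, insF_self] at hj1
        refine ⟨hj1.2, hj1.1, ⟨fun i hi => ?_, fun i hi => ?_⟩⟩
        · have := h1 i.1 hi
          rwa [insF_ne j _ _ i.2, insF_ne j _ _ i.2, Subtype.coe_eta] at this
        · have := h2 i.1 hi
          rwa [insF_ne j _ _ i.2, insF_ne j _ _ i.2, insF_ne j _ _ i.2,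
            insF_ne j _ _ i.2, Subtype.coe_eta] at this
      · rintro ⟨hb, ha, hg1, hg2⟩
        constructor
        · intro i hi
          by_cases hij : i = j
          · subst hij; rw [insF_self, insF_self, ha, hb]; exact ⟨rfl, rfl⟩
          · rw [insF_ne j _ _ hij, insF_ne j _ _ hij]
            exact hg1 ⟨i, hij⟩ hi
        · intro i hi
          have hij : i ≠ j := fun h => hj (h ▸ hi)
          rw [insF_ne j _ _ hij, insF_ne j _ _ hij, insF_ne j _ _ hij, insF_ne j _ _ hij]
          exact hg2 ⟨i, hij⟩ hi
    rw [hbox, if_congr hiff rfl rfl]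
    by_cases h1 : β' = v j <;> by_cases h2 : α' = u j <;> simp [h1, h2]
  simp only [point]
  -- collapse (β', gb)
  have step1 : ∀ (gx gy ga : {i : Fin n // i ≠ j} → Bool) (α' : Bool),
      (∑ β' : Bool, ∑ gb, if β' = v j then if α' = u j then
          (if CONDg j S' u v gx gy ga gb
           then R (insF j c gx) (insF j d gy) (insF j α ga) (insF j β gb) else 0)
          else 0 else 0)
      = ∑ gb, if α' = u j then
          (if CONDg j S' u v gx gy ga gb
           then R (insF j c gx) (insF j d gy) (insF j α ga) (insF j β gb) else 0) else 0 :=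
    fun gx gy ga α' => sum_boolPin (v j) _
  simp only [step1]
  -- collapse (α', ga)
  have step2 : ∀ (gx gy : {i : Fin n // i ≠ j} → Bool),
      (∑ α' : Bool, ∑ ga, ∑ gb, if α' = u j then
          (if CONDg j S' u v gx gy ga gb
           then R (insF j c gx) (insF j d gy) (insF j α ga) (insF j β gb) else 0) else 0)
      = ∑ ga, ∑ gb, if CONDg j S' u v gx gy ga gb
           then R (insF j c gx) (insF j d gy) (insF j α ga) (insF j β gb) else 0 := by
    intro gx gy
    have : ∀ (α' : Bool) (ga : {i : Fin n // i ≠ j} → Bool),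
        (∑ gb, if α' = u j then
          (if CONDg j S' u v gx gy ga gb
           then R (insF j c gx) (insF j d gy) (insF j α ga) (insF j β gb) else 0) else 0)
        = if α' = u j then (∑ gb, if CONDg j S' u v gx gy ga gb
           then R (insF j c gx) (insF j d gy) (insF j α ga) (insF j β gb) else 0) else 0 :=
      fun α' ga => sum_if_pull _ _
    simp only [this]
    exact sum_boolPin (u j) _
  simp only [step2]
  -- collapse (d', gy) and (c', gx)
  have step3 : ∀ gx : {i : Fin n // i ≠ j} → Bool,
      (∑ _d' : Bool, ∑ gy, ∑ ga, ∑ gb, if CONDg j S' u v gx gy ga gb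
           then R (insF j c gx) (insF j d gy) (insF j α ga) (insF j β gb) else 0)
      = 2 * ∑ gy, ∑ ga, ∑ gb, if CONDg j S' u v gx gy ga gb
           then R (insF j c gx) (insF j d gy) (insF j α ga) (insF j β gb) else 0 :=
    fun gx => sum_boolConst _
  simp only [step3]
  have step4 :
      (∑ _c' : Bool, ∑ gx, 2 * ∑ gy, ∑ ga, ∑ gb, if CONDg j S' u v gx gy ga gb
           then R (insF j c gx) (insF j d gy) (insF j α ga) (insF j β gb) else 0)
      = 2 * ∑ gx, 2 * ∑ gy, ∑ ga, ∑ gb, if CONDg j S' u v gx gy ga gb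
           then R (insF j c gx) (insF j d gy) (insF j α ga) (insF j β gb) else 0 :=
    sum_boolConst _
  rw [step4, Canon]
  simp only [← Finset.mul_sum]
  ring

set_option maxHeartbeats 800000 in
lemma lam_insert_split {n : ℕ} (j : Fin n) (S' : Finset (Fin n)) (hj : j ∉ S') (R : BoxT n)
    (u v : Fin n → Bool) :
    lam (insert j S') R u v
      = ∑ c : Bool, ∑ gx : {i : Fin n // i ≠ j} → Bool, ∑ d : Bool, ∑ gy,
          ∑ α : Bool, ∑ ga, ∑ β : Bool, ∑ gb,
          if ¬ (xor c d = (α && β)) then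
            (if CONDg j S' u v gx gy ga gb
             then R (insF j c gx) (insF j d gy) (insF j α ga) (insF j β gb) else 0)
          else 0 := by
  classical
  rw [lam, sum_split4 j]
  refine Finset.sum_congr rfl fun c _ => Finset.sum_congr rfl fun gx _ => ?_
  refine Finset.sum_congr rfl fun d _ => Finset.sum_congr rfl fun gy _ => ?_
  refine Finset.sum_congr rfl fun α _ => Finset.sum_congr rfl fun ga _ => ?_
  refine Finset.sum_congr rfl fun β _ => Finset.sum_congr rfl fun gb _ => ?_
  have hiff : ((∀ i, i ∉ insert j S' → ((insF j α ga) i = u i ∧ (insF j β gb) i = v i)) ∧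
        (∀ i ∈ insert j S', ¬ (xor ((insF j c gx) i) ((insF j d gy) i)
          = ((insF j α ga) i && (insF j β gb) i))))
      ↔ (¬ (xor c d = (α && β)) ∧ CONDg j S' u v gx gy ga gb) := by
    constructor
    · rintro ⟨h1, h2⟩
      have hxor := h2 j (Finset.mem_insert_self j S')
      rw [insF_self, insF_self, insF_self, insF_self] at hxor
      refine ⟨hxor, fun i hi => ?_, fun i hi => ?_⟩
      · have := h1 i.1 (by simp [Finset.mem_insert, i.2, hi])
        rwa [insF_ne j _ _ i.2, insF_ne j _ _ i.2, Subtype.coe_eta] at this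
      · have := h2 i.1 (Finset.mem_insert_of_mem hi)
        rwa [insF_ne j _ _ i.2, insF_ne j _ _ i.2, insF_ne j _ _ i.2,
          insF_ne j _ _ i.2, Subtype.coe_eta] at this
    · rintro ⟨hxor, hg1, hg2⟩
      constructor
      · intro i hi
        have hij : i ≠ j := by
          intro h; exact hi (h ▸ Finset.mem_insert_self j S')
        have hiS : i ∉ S' := fun h => hi (Finset.mem_insert_of_mem h)
        rw [insF_ne j _ _ hij, insF_ne j _ _ hij]
        exact hg1 ⟨i, hij⟩ hiS
      · intro i hi
        by_cases hij : i = j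
        · subst hij; rw [insF_self, insF_self, insF_self, insF_self]; exact hxor
        · rw [insF_ne j _ _ hij, insF_ne j _ _ hij, insF_ne j _ _ hij, insF_ne j _ _ hij]
          exact hg2 ⟨i, hij⟩ (by rcases Finset.mem_insert.mp hi with h | h; exact absurd h hij; exact h)
  rw [if_congr hiff rfl rfl]
  by_cases h1 : ¬ (xor c d = (α && β)) <;> simp [h1]

set_option maxHeartbeats 1000000 in
lemma reorder {G : Type*} [Fintype G] (H : Bool → Bool → Bool → Bool → G → G → G → G → ℝ) :
    ∑ c : Bool, ∑ gx : G, ∑ d : Bool, ∑ gy : G, ∑ α : Bool, ∑ ga : G, ∑ β : Bool, ∑ gb : G,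
        H c d α β gx gy ga gb
    = ∑ α : Bool, ∑ β : Bool, ∑ c : Bool, ∑ d : Bool, ∑ gx : G, ∑ gy : G, ∑ ga : G, ∑ gb : G,
        H c d α β gx gy ga gb := by
  simp only [Fintype.sum_bool, Finset.sum_add_distrib]
  ring

set_option maxHeartbeats 1600000 in
lemma lam_insert {n : ℕ} (j : Fin n) (S' : Finset (Fin n)) (hj : j ∉ S') (R : BoxT n)
    (u v : Fin n → Bool) :
    lam (insert j S') R u v
      = (1/4) * ∑ α : Bool, ∑ β : Bool, ∑ c : Bool, ∑ d : Bool,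
          if ¬ (xor c d = (α && β)) then lam S' (Rpin R j c d α β) u v else 0 := by
  classical
  rw [lam_insert_split j S' hj R u v]
  rw [reorder (fun c d α β gx gy ga gb =>
    if ¬ (xor c d = (α && β)) then
      (if CONDg j S' u v gx gy ga gb
       then R (insF j c gx) (insF j d gy) (insF j α ga) (insF j β gb) else 0)
    else 0)]
  have rhs_eq : ∀ α β c d : Bool,
      (if ¬ (xor c d = (α && β)) then lam S' (Rpin R j c d α β) u v else 0)
      = 4 * ∑ gx : {i : Fin n // i ≠ j} → Bool, ∑ gy, ∑ ga, ∑ gb,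
          if ¬ (xor c d = (α && β)) then
            (if CONDg j S' u v gx gy ga gb
             then R (insF j c gx) (insF j d gy) (insF j α ga) (insF j β gb) else 0)
          else 0 := by
    intro α β c d
    by_cases h : ¬ (xor c d = (α && β)) <;>
      simp [h, lam_pin j S' hj R u v, Canon]
  simp only [rhs_eq]
  simp only [← Finset.mul_sum]
  ring


lemma swapBool2 {G H : Type*} [Fintype G] [Fintype H] (F : Bool → G → H → ℝ) :
    ∑ c : Bool, ∑ g : G, ∑ h : H, F c g h = ∑ g : G, ∑ h : H, ∑ c : Bool, F c g h :=
  (Finset.sum_comm).trans (Finset.sum_congr rfl fun _ _ => Finset.sum_comm)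

lemma swapBool4 {G : Type*} [Fintype G] (F : Bool → G → G → G → G → ℝ) :
    ∑ c : Bool, ∑ g1 : G, ∑ g2 : G, ∑ g3 : G, ∑ g4 : G, F c g1 g2 g3 g4
      = ∑ g1 : G, ∑ g2 : G, ∑ g3 : G, ∑ g4 : G, ∑ c : Bool, F c g1 g2 g3 g4 :=
  (Finset.sum_comm).trans (Finset.sum_congr rfl fun _ _ =>
    (Finset.sum_comm).trans (Finset.sum_congr rfl fun _ _ =>
      (Finset.sum_comm).trans (Finset.sum_congr rfl fun _ _ => Finset.sum_comm)))

lemma biasNS_A {n : ℕ} (j : Fin n) (S' : Finset (Fin n)) {R : BoxT n} (hR : NSC n R)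
    (u v : Fin n → Bool) (d a a' b : Bool) :
    ∑ c : Bool, bias S' (Rpin R j c d a b) u v = ∑ c : Bool, bias S' (Rpin R j c d a' b) u v := by
  unfold bias Rpin
  rw [swapBool2, swapBool2]
  refine Finset.sum_congr rfl fun x _ => Finset.sum_congr rfl fun y _ => ?_
  rw [← Finset.mul_sum, ← Finset.mul_sum]
  congr 1
  have h := hR.2.1 x (Function.update y j d) (Function.update u j a) (Function.update v j b) j a'
  rwa [Function.update_idem] at h

lemma biasNS_B {n : ℕ} (j : Fin n) (S' : Finset (Fin n)) {R : BoxT n} (hR : NSC n R)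
    (u v : Fin n → Bool) (c a b b' : Bool) :
    ∑ d : Bool, bias S' (Rpin R j c d a b) u v = ∑ d : Bool, bias S' (Rpin R j c d a b') u v := by
  unfold bias Rpin
  rw [swapBool2, swapBool2]
  refine Finset.sum_congr rfl fun x _ => Finset.sum_congr rfl fun y _ => ?_
  rw [← Finset.mul_sum, ← Finset.mul_sum]
  congr 1
  have h := hR.2.2 (Function.update x j c) y (Function.update u j a) (Function.update v j b) j b'
  rwa [Function.update_idem] at h

lemma lamNS_A {n : ℕ} (j : Fin n) (S' : Finset (Fin n)) (hj : j ∉ S') {R : BoxT n} (hR : NSC n R)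
    (u v : Fin n → Bool) (d a a' b : Bool) :
    ∑ c : Bool, lam S' (Rpin R j c d a b) u v = ∑ c : Bool, lam S' (Rpin R j c d a' b) u v := by
  classical
  have key : ∑ c : Bool, Canon j S' R u v c d a b = ∑ c : Bool, Canon j S' R u v c d a' b := by
    unfold Canon
    rw [swapBool4, swapBool4]
    refine Finset.sum_congr rfl fun gx _ => Finset.sum_congr rfl fun gy _ =>
      Finset.sum_congr rfl fun ga _ => Finset.sum_congr rfl fun gb _ => ?_
    rw [sum_if_pull, sum_if_pull]
    refine if_congr Iff.rfl ?_ rfl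
    have h := hR.2.1 (insF j true gx) (insF j d gy) (insF j a ga) (insF j b gb) j a'
    simp only [update_insF] at h
    exact h
  simp only [lam_pin j S' hj R u v]
  rw [← Finset.mul_sum, ← Finset.mul_sum, key]

lemma lamNS_B {n : ℕ} (j : Fin n) (S' : Finset (Fin n)) (hj : j ∉ S') {R : BoxT n} (hR : NSC n R)
    (u v : Fin n → Bool) (c a b b' : Bool) :
    ∑ d : Bool, lam S' (Rpin R j c d a b) u v = ∑ d : Bool, lam S' (Rpin R j c d a b') u v := by
  classical
  have key : ∑ d : Bool, Canon j S' R u v c d a b = ∑ d : Bool, Canon j S' R u v c d a b' := by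
    unfold Canon
    rw [swapBool4 (fun d gx gy ga gb => if CONDg j S' u v gx gy ga gb
        then R (insF j c gx) (insF j d gy) (insF j a ga) (insF j b gb) else 0),
      swapBool4 (fun d gx gy ga gb => if CONDg j S' u v gx gy ga gb
        then R (insF j c gx) (insF j d gy) (insF j a ga) (insF j b' gb) else 0)]
    refine Finset.sum_congr rfl fun gx _ => Finset.sum_congr rfl fun gy _ =>
      Finset.sum_congr rfl fun ga _ => Finset.sum_congr rfl fun gb _ => ?_
    rw [sum_if_pull, sum_if_pull]
    refine if_congr Iff.rfl ?_ rfl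
    have h := hR.2.2 (insF j c gx) (insF j true gy) (insF j a ga) (insF j b gb) j b'
    simp only [update_insF] at h
    exact h
  simp only [lam_pin j S' hj R u v]
  rw [← Finset.mul_sum, ← Finset.mul_sum, key]

set_option maxHeartbeats 1000000 in
theorem xor_le_lam {n : ℕ} (S : Finset (Fin n)) (u v : Fin n → Bool) :
    ∀ R : BoxT n, NSC n R → |bias S R u v| ≤ lam S R u v := by
  classical
  induction S using Finset.induction_on with
  | empty =>
    intro R hR
    have hb : bias (∅ : Finset (Fin n)) R u v = ∑ x, ∑ y, R x y u v := by
      unfold bias; simp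
    have hl : lam (∅ : Finset (Fin n)) R u v = ∑ x, ∑ y, R x y u v := by
      unfold lam
      refine Finset.sum_congr rfl fun x _ => Finset.sum_congr rfl fun y _ => ?_
      have : ∀ a b : Fin n → Bool,
          (if (∀ i, i ∉ (∅ : Finset (Fin n)) → (a i = u i ∧ b i = v i)) ∧
              (∀ i ∈ (∅ : Finset (Fin n)), ¬ (xor (x i) (y i) = (a i && b i)))
           then R x y a b else 0)
          = if a = u then (if b = v then R x y a b else 0) else 0 := by
        intro a b
        have : ((∀ i, i ∉ (∅ : Finset (Fin n)) → (a i = u i ∧ b i = v i)) ∧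
            (∀ i ∈ (∅ : Finset (Fin n)), ¬ (xor (x i) (y i) = (a i && b i))))
            ↔ (a = u ∧ b = v) := by
          simp [funext_iff, forall_and]
        rw [if_congr this rfl rfl]
        by_cases h1 : a = u <;> by_cases h2 : b = v <;> simp [h1, h2]
      simp only [this]
      have hb2 : ∀ a : Fin n → Bool,
          (∑ b, if a = u then if b = v then R x y a b else 0 else 0)
          = if a = u then R x y a v else 0 := by
        intro a
        by_cases h : a = u <;> simp [h, Finset.sum_ite_eq']
      simp only [hb2]
      simp [Finset.sum_ite_eq']
    rw [hb, hl]
    have : 0 ≤ ∑ x, ∑ y, R x y u v :=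
      Finset.sum_nonneg fun x _ => Finset.sum_nonneg fun y _ => hR.1 x y u v
    rw [abs_of_nonneg this]
  | @insert j S' hj ih =>
    intro R hR
    set Tp : Bool → Bool → Bool → Bool → ℝ := fun c d a b =>
      (lam S' (Rpin R j c d a b) u v + bias S' (Rpin R j c d a b) u v) / 2 with hTp
    set Tm : Bool → Bool → Bool → Bool → ℝ := fun c d a b =>
      (lam S' (Rpin R j c d a b) u v - bias S' (Rpin R j c d a b) u v) / 2 with hTm
    have hIH : ∀ c d a b : Bool, |bias S' (Rpin R j c d a b) u v| ≤ lam S' (Rpin R j c d a b) u v :=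
      fun c d a b => ih (Rpin R j c d a b) (NSC_pin hR j c d a b)
    have hposP : ∀ c d a b, 0 ≤ Tp c d a b := by
      intro c d a b
      have := (abs_le.mp (hIH c d a b)).1
      simp only [hTp]; linarith
    have hposM : ∀ c d a b, 0 ≤ Tm c d a b := by
      intro c d a b
      have := (abs_le.mp (hIH c d a b)).2
      simp only [hTm]; linarith
    have hAP : ∀ d b a a', ∑ c, Tp c d a b = ∑ c, Tp c d a' b := by
      intro d b a a'
      simp only [hTp]
      rw [← Finset.sum_div, ← Finset.sum_div, Finset.sum_add_distrib, Finset.sum_add_distrib,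
        lamNS_A j S' hj hR u v d a a' b, biasNS_A j S' hR u v d a a' b]
    have hAM : ∀ d b a a', ∑ c, Tm c d a b = ∑ c, Tm c d a' b := by
      intro d b a a'
      simp only [hTm]
      rw [← Finset.sum_div, ← Finset.sum_div, Finset.sum_sub_distrib, Finset.sum_sub_distrib,
        lamNS_A j S' hj hR u v d a a' b, biasNS_A j S' hR u v d a a' b]
    have hBP : ∀ c a b b', ∑ d, Tp c d a b = ∑ d, Tp c d a b' := by
      intro c a b b'
      simp only [hTp]
      rw [← Finset.sum_div, ← Finset.sum_div, Finset.sum_add_distrib, Finset.sum_add_distrib,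
        lamNS_B j S' hj hR u v c a b b', biasNS_B j S' hR u v c a b b']
    have hBM : ∀ c a b b', ∑ d, Tm c d a b = ∑ d, Tm c d a b' := by
      intro c a b b'
      simp only [hTm]
      rw [← Finset.sum_div, ← Finset.sum_div, Finset.sum_sub_distrib, Finset.sum_sub_distrib,
        lamNS_B j S' hj hR u v c a b b', biasNS_B j S' hR u v c a b b']
    have h1 := single_box Tp hposP hAP hBP (u j) (v j)
    have h2 := single_box Tm hposM hAM hBM (u j) (v j)
    rw [bias_insert j S' hj R u v, lam_insert j S' hj R u v]
    have hsplit : (∑ c : Bool, ∑ d : Bool, sg c * bias S' (Rpin R j c d (u j) (v j)) u v)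
        = (∑ c : Bool, ∑ d : Bool, sg c * Tp c d (u j) (v j))
          - (∑ c : Bool, ∑ d : Bool, sg c * Tm c d (u j) (v j)) := by
      rw [← Finset.sum_sub_distrib]
      refine Finset.sum_congr rfl fun c _ => ?_
      rw [← Finset.sum_sub_distrib]
      refine Finset.sum_congr rfl fun d _ => ?_
      simp only [hTp, hTm]; ring
    have hsum : (∑ a : Bool, ∑ b : Bool, ∑ c : Bool, ∑ d : Bool,
          (if xor c d ≠ (a && b) then Tp c d a b else 0))
        + (∑ a : Bool, ∑ b : Bool, ∑ c : Bool, ∑ d : Bool,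
          (if xor c d ≠ (a && b) then Tm c d a b else 0))
        = ∑ a : Bool, ∑ b : Bool, ∑ c : Bool, ∑ d : Bool,
          (if ¬ (xor c d = (a && b)) then lam S' (Rpin R j c d a b) u v else 0) := by
      rw [← Finset.sum_add_distrib]
      refine Finset.sum_congr rfl fun a _ => ?_
      rw [← Finset.sum_add_distrib]
      refine Finset.sum_congr rfl fun b _ => ?_
      rw [← Finset.sum_add_distrib]
      refine Finset.sum_congr rfl fun c _ => ?_
      rw [← Finset.sum_add_distrib]
      refine Finset.sum_congr rfl fun d _ => ?_
      by_cases h : xor c d = (a && b) <;> simp [h, hTp, hTm] <;> ring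
    rw [hsplit]
    calc |1/4 * ((∑ c : Bool, ∑ d : Bool, sg c * Tp c d (u j) (v j))
            - (∑ c : Bool, ∑ d : Bool, sg c * Tm c d (u j) (v j)))|
        ≤ 1/4 * (|∑ c : Bool, ∑ d : Bool, sg c * Tp c d (u j) (v j)|
            + |∑ c : Bool, ∑ d : Bool, sg c * Tm c d (u j) (v j)|) := by
          rw [abs_mul]
          have := abs_sub (∑ c : Bool, ∑ d : Bool, sg c * Tp c d (u j) (v j))
            (∑ c : Bool, ∑ d : Bool, sg c * Tm c d (u j) (v j))
          have h14 : |(1:ℝ)/4| = 1/4 := by norm_num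
          rw [h14]
          nlinarith [abs_sub_abs_le_abs_sub (∑ c : Bool, ∑ d : Bool, sg c * Tp c d (u j) (v j)) 0]
      _ ≤ 1/4 * ∑ a : Bool, ∑ b : Bool, ∑ c : Bool, ∑ d : Bool,
            (if ¬ (xor c d = (a && b)) then lam S' (Rpin R j c d a b) u v else 0) := by
          rw [← hsum]
          have := add_le_add h1 h2
          linarith


lemma swap5 {Z G1 G2 G3 G4 : Type*} [Fintype Z] [Fintype G1] [Fintype G2] [Fintype G3]
    [Fintype G4] (F : Z → G1 → G2 → G3 → G4 → ℝ) :
    ∑ z : Z, ∑ g1 : G1, ∑ g2 : G2, ∑ g3 : G3, ∑ g4 : G4, F z g1 g2 g3 g4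
      = ∑ g1 : G1, ∑ g2 : G2, ∑ g3 : G3, ∑ g4 : G4, ∑ z : Z, F z g1 g2 g3 g4 :=
  (Finset.sum_comm).trans (Finset.sum_congr rfl fun _ _ =>
    (Finset.sum_comm).trans (Finset.sum_congr rfl fun _ _ =>
      (Finset.sum_comm).trans (Finset.sum_congr rfl fun _ _ => Finset.sum_comm)))

lemma lam_congr {n : ℕ} (S : Finset (Fin n)) {R R' : BoxT n} (u v : Fin n → Bool)
    (h : ∀ x y a b, R x y a b = R' x y a b) : lam S R u v = lam S R' u v := by
  unfold lam
  exact Finset.sum_congr rfl fun x _ => Finset.sum_congr rfl fun y _ =>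
    Finset.sum_congr rfl fun a _ => Finset.sum_congr rfl fun b _ => by rw [h]

lemma sumIfPull {G : Type*} [Fintype G] (P : Prop) [Decidable P] (f : G → ℝ) :
    (∑ g, if P then f g else 0) = if P then ∑ g, f g else 0 := by split_ifs <;> simp

lemma lam_mix {n : ℕ} {Z : Type*} [Fintype Z] (S : Finset (Fin n)) (p : Z → ℝ)
    (P : Z → BoxT n) (u v : Fin n → Bool) :
    ∑ z, p z * lam S (P z) u v = lam S (fun x y a b => ∑ z, p z * P z x y a b) u v := by
  classical
  unfold lam
  have h1 : ∀ z, p z * (∑ x, ∑ y, ∑ a, ∑ b,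
      if (∀ i, i ∉ S → (a i = u i ∧ b i = v i)) ∧
          (∀ i ∈ S, ¬ (xor (x i) (y i) = (a i && b i)))
      then P z x y a b else 0)
      = ∑ x, ∑ y, ∑ a, ∑ b,
      if (∀ i, i ∉ S → (a i = u i ∧ b i = v i)) ∧
          (∀ i ∈ S, ¬ (xor (x i) (y i) = (a i && b i)))
      then p z * P z x y a b else 0 := by
    intro z
    rw [Finset.mul_sum]
    refine Finset.sum_congr rfl fun x _ => ?_
    rw [Finset.mul_sum]
    refine Finset.sum_congr rfl fun y _ => ?_
    rw [Finset.mul_sum]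
    refine Finset.sum_congr rfl fun a _ => ?_
    rw [Finset.mul_sum]
    refine Finset.sum_congr rfl fun b _ => ?_
    split_ifs <;> simp
  simp only [h1]
  rw [swap5 (fun z x y a b =>
      if (∀ i, i ∉ S → (a i = u i ∧ b i = v i)) ∧
          (∀ i ∈ S, ¬ (xor (x i) (y i) = (a i && b i)))
      then p z * P z x y a b else 0)]
  refine Finset.sum_congr rfl fun x _ => Finset.sum_congr rfl fun y _ =>
    Finset.sum_congr rfl fun a _ => Finset.sum_congr rfl fun b _ => ?_
  rw [sumIfPull]

set_option maxHeartbeats 1000000 in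
lemma lam_prod {n : ℕ} (S : Finset (Fin n)) (ε : Fin n → ℝ) (u v : Fin n → Bool) :
    lam S (fun x y a b => ∏ i, Peps (ε i) (x i) (y i) (a i) (b i)) u v
      = ∏ i ∈ S, (4 * ε i) := by
  classical
  unfold lam
  have point : ∀ x y a b : Fin n → Bool,
      (if (∀ i, i ∉ S → (a i = u i ∧ b i = v i)) ∧
          (∀ i ∈ S, ¬ (xor (x i) (y i) = (a i && b i)))
       then ∏ i, Peps (ε i) (x i) (y i) (a i) (b i) else 0)
      = ∏ i, (if (if i ∈ S then ¬ (xor (x i) (y i) = (a i && b i))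
                  else (a i = u i ∧ b i = v i)) then (1:ℝ) else 0)
              * Peps (ε i) (x i) (y i) (a i) (b i) := by
    intro x y a b
    rw [Finset.prod_mul_distrib, Finset.prod_boole]
    have hiff : (∀ i ∈ Finset.univ, (if i ∈ S then ¬ (xor (x i) (y i) = (a i && b i))
        else (a i = u i ∧ b i = v i)))
        ↔ ((∀ i, i ∉ S → (a i = u i ∧ b i = v i)) ∧
          (∀ i ∈ S, ¬ (xor (x i) (y i) = (a i && b i)))) := by
      constructor
      · intro h
        refine ⟨fun i hi => ?_, fun i hi => ?_⟩
        · have := h i (Finset.mem_univ i); rwa [if_neg hi] at this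
        · have := h i (Finset.mem_univ i); rwa [if_pos hi] at this
      · rintro ⟨h1, h2⟩ i _
        by_cases hi : i ∈ S
        · rw [if_pos hi]; exact h2 i hi
        · rw [if_neg hi]; exact h1 i hi
    by_cases h : (∀ i, i ∉ S → (a i = u i ∧ b i = v i)) ∧
        (∀ i ∈ S, ¬ (xor (x i) (y i) = (a i && b i)))
    · rw [if_pos h, if_pos (hiff.mpr h), one_mul]
    · rw [if_neg h, if_neg (fun hc => h (hiff.mp hc)), zero_mul]
  simp only [point]
  have e4 : ∀ (g : Fin n → Bool → ℝ),
      (∑ b : Fin n → Bool, ∏ i, g i (b i)) = ∏ i, ∑ β : Bool, g i β := by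
    intro g
    rw [← Fintype.piFinset_univ, ← Finset.prod_univ_sum]
  have fact4 : ∀ (f : Fin n → Bool → Bool → Bool → Bool → ℝ),
      (∑ x : Fin n → Bool, ∑ y : Fin n → Bool, ∑ a : Fin n → Bool, ∑ b : Fin n → Bool,
        ∏ i, f i (x i) (y i) (a i) (b i))
      = ∏ i, ∑ ξ : Bool, ∑ η : Bool, ∑ α : Bool, ∑ β : Bool, f i ξ η α β := by
    intro f
    calc (∑ x : Fin n → Bool, ∑ y : Fin n → Bool, ∑ a : Fin n → Bool, ∑ b : Fin n → Bool,
        ∏ i, f i (x i) (y i) (a i) (b i))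
        = ∑ x : Fin n → Bool, ∑ y : Fin n → Bool, ∑ a : Fin n → Bool,
            ∏ i, ∑ β : Bool, f i (x i) (y i) (a i) β := by
          refine Finset.sum_congr rfl fun x _ => Finset.sum_congr rfl fun y _ =>
            Finset.sum_congr rfl fun a _ => ?_
          exact e4 (fun i β => f i (x i) (y i) (a i) β)
      _ = ∑ x : Fin n → Bool, ∑ y : Fin n → Bool,
            ∏ i, ∑ α : Bool, ∑ β : Bool, f i (x i) (y i) α β := by
          refine Finset.sum_congr rfl fun x _ => Finset.sum_congr rfl fun y _ => ?_
          exact e4 (fun i α => ∑ β : Bool, f i (x i) (y i) α β)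
      _ = ∑ x : Fin n → Bool, ∏ i, ∑ η : Bool, ∑ α : Bool, ∑ β : Bool, f i (x i) η α β := by
          refine Finset.sum_congr rfl fun x _ => ?_
          exact e4 (fun i η => ∑ α : Bool, ∑ β : Bool, f i (x i) η α β)
      _ = ∏ i, ∑ ξ : Bool, ∑ η : Bool, ∑ α : Bool, ∑ β : Bool, f i ξ η α β :=
          e4 (fun i ξ => ∑ η : Bool, ∑ α : Bool, ∑ β : Bool, f i ξ η α β)
  rw [fact4 (fun i ξ η α β =>
      (if (if i ∈ S then ¬ (xor ξ η = (α && β)) else (α = u i ∧ β = v i))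
       then (1:ℝ) else 0) * Peps (ε i) ξ η α β)]
  have coord : ∀ i : Fin n,
      (∑ ξ : Bool, ∑ η : Bool, ∑ α : Bool, ∑ β : Bool,
        (if (if i ∈ S then ¬ (xor ξ η = (α && β)) else (α = u i ∧ β = v i))
         then (1:ℝ) else 0) * Peps (ε i) ξ η α β)
      = if i ∈ S then 4 * ε i else 1 := by
    intro i
    by_cases hi : i ∈ S
    · simp only [if_pos hi, Fintype.sum_bool, Peps]
      norm_num
      ring
    · simp only [if_neg hi, Fintype.sum_bool, Peps]
      cases hu : u i <;> cases hv : v i <;> norm_num <;> ring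
  calc (∏ i, ∑ ξ : Bool, ∑ η : Bool, ∑ α : Bool, ∑ β : Bool,
        (if (if i ∈ S then ¬ (xor ξ η = (α && β)) else (α = u i ∧ β = v i))
         then (1:ℝ) else 0) * Peps (ε i) ξ η α β)
      = ∏ i, (if i ∈ S then 4 * ε i else 1) := Finset.prod_congr rfl fun i _ => coord i
    _ = ∏ i ∈ S, (4 * ε i) := by
        rw [Finset.prod_ite_mem Finset.univ S (fun i => 4 * ε i), Finset.univ_inter]


def z2 (b : Bool) : ZMod 2 := if b then 1 else 0

noncomputable def sgz (a : ZMod 2) : ℝ := if a = 1 then -1 else 1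

lemma sgz_add (a b : ZMod 2) : sgz (a + b) = sgz a * sgz b := by
  have hc : ∀ c : ZMod 2, c = 0 ∨ c = 1 := by decide
  have h11 : (1 + 1 : ZMod 2) = 0 := by decide
  have h0 : (0 : ZMod 2) ≠ 1 := by decide
  rcases hc a with ha | ha <;> rcases hc b with hb | hb <;> subst ha <;> subst hb <;>
    simp [sgz, h11, h0] <;> norm_num

lemma sg_eq (b : Bool) : sg b = sgz (z2 b) := by
  have h0 : (0 : ZMod 2) ≠ 1 := by decide
  cases b <;> simp [sg, sgz, z2, h0]

lemma z2_and (p q : Bool) : z2 (p && q) = z2 p * z2 q := by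
  cases p <;> cases q <;> simp [z2]

lemma sgz_sum {κ : Type*} (s : Finset κ) (f : κ → ZMod 2) :
    sgz (∑ i ∈ s, f i) = ∏ i ∈ s, sgz (f i) := by
  classical
  induction s using Finset.cons_induction with
  | empty =>
    have h0 : (0 : ZMod 2) ≠ 1 := by decide
    simp [sgz, h0]
  | cons a s ha ih => rw [Finset.sum_cons, Finset.prod_cons, sgz_add, ih]

lemma z2_decide_mod (c : ℕ) : z2 (decide (c % 2 = 1)) = (c : ZMod 2) := by
  rw [← ZMod.natCast_mod c 2]
  rcases Nat.mod_two_eq_zero_or_one c with h | h <;> simp [h, z2]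

lemma z2_parity {κ : Type*} [DecidableEq κ] (s : Finset κ) (f g : κ → Bool) :
    z2 (decide ((s.filter fun r => (f r && g r) = true).card % 2 = 1))
      = ∑ r ∈ s, z2 (f r) * z2 (g r) := by
  rw [z2_decide_mod]
  rw [Finset.card_filter]
  rw [Nat.cast_sum]
  refine Finset.sum_congr rfl fun r _ => ?_
  cases hf : f r <;> cases hg : g r <;> simp [z2]

def rT {s n : ℕ} (A : Fin s → Fin n → Bool) (t : Fin s → Bool) : Fin n → Bool :=
  fun i => decide ((Finset.univ.filter fun r => (t r && A r i) = true).card % 2 = 1)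

noncomputable def chi {s : ℕ} (t w : Fin s → Bool) : ℝ := ∏ r, sg (t r && w r)

lemma chi_matVec {s n : ℕ} (A : Fin s → Fin n → Bool) (t : Fin s → Bool) (x : Fin n → Bool) :
    chi t (matVec A x) = ∏ i, sg (rT A t i && x i) := by
  unfold chi
  calc ∏ r, sg (t r && matVec A x r)
      = ∏ r, sgz (z2 (t r) * z2 (matVec A x r)) := by
        refine Finset.prod_congr rfl fun r _ => ?_
        rw [sg_eq, z2_and]
    _ = sgz (∑ r, z2 (t r) * z2 (matVec A x r)) := (sgz_sum _ _).symm
    _ = sgz (∑ i, z2 (rT A t i) * z2 (x i)) := by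
        congr 1
        have hmv : ∀ r, z2 (matVec A x r) = ∑ i, z2 (A r i) * z2 (x i) :=
          fun r => z2_parity Finset.univ (fun i => A r i) x
        have hrt : ∀ i, z2 (rT A t i) = ∑ r, z2 (t r) * z2 (A r i) :=
          fun i => z2_parity Finset.univ t (fun r => A r i)
        calc ∑ r, z2 (t r) * z2 (matVec A x r)
            = ∑ r, ∑ i, z2 (t r) * z2 (A r i) * z2 (x i) := by
              refine Finset.sum_congr rfl fun r _ => ?_
              rw [hmv r, Finset.mul_sum]
              exact Finset.sum_congr rfl fun i _ => by ring
          _ = ∑ i, ∑ r, z2 (t r) * z2 (A r i) * z2 (x i) := Finset.sum_comm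
          _ = ∑ i, z2 (rT A t i) * z2 (x i) := by
              refine Finset.sum_congr rfl fun i _ => ?_
              rw [hrt i, Finset.sum_mul]
    _ = ∏ i, sgz (z2 (rT A t i) * z2 (x i)) := sgz_sum _ _
    _ = ∏ i, sg (rT A t i && x i) := by
        refine Finset.prod_congr rfl fun i _ => ?_
        rw [sg_eq, z2_and]

lemma chi_mul {s : ℕ} (t w σ : Fin s → Bool) :
    chi t w * chi t σ = chi t (fun r => xor (w r) (σ r)) := by
  unfold chi
  rw [← Finset.prod_mul_distrib]
  refine Finset.prod_congr rfl fun r _ => ?_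
  cases ht : t r <;> cases hw : w r <;> cases hs : σ r <;> simp [sg, ht, hw, hs] <;> norm_num

lemma sum_chi {s : ℕ} (w : Fin s → Bool) :
    ∑ t : Fin s → Bool, chi t w = if w = (fun _ => false) then (2^s : ℝ) else 0 := by
  unfold chi
  have h1 : ∑ t : Fin s → Bool, ∏ r, sg (t r && w r) = ∏ r, ∑ b : Bool, sg (b && w r) := by
    rw [← Fintype.piFinset_univ]
    exact (Finset.prod_univ_sum (fun _ => (Finset.univ : Finset Bool))
      (fun r b => sg (b && w r))).symm
  rw [h1]
  by_cases h : w = fun _ => false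
  · subst h
    simp [sg]
  · have : ∃ r, w r = true := by
      by_contra hc
      push_neg at hc
      exact h (funext fun r => by simpa using hc r)
    obtain ⟨r, hr⟩ := this
    rw [if_neg h]
    refine Finset.prod_eq_zero (Finset.mem_univ r) ?_
    rw [hr]
    simp [sg]

lemma abs_chi {s : ℕ} (t w : Fin s → Bool) : |chi t w| = 1 := by
  unfold chi
  rw [Finset.abs_prod]
  refine Finset.prod_eq_one fun r _ => ?_
  cases (t r && w r) <;> simp [sg]

lemma chi_false {s : ℕ} (w : Fin s → Bool) : chi (fun _ => false) w = 1 := by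
  unfold chi
  exact Finset.prod_eq_one fun r _ => by simp [sg]

lemma indicator_eq {s : ℕ} (w σ : Fin s → Bool) :
    (if w = σ then (1:ℝ) else 0) = ((2:ℝ)^s)⁻¹ * ∑ t, chi t w * chi t σ := by
  simp only [chi_mul]
  rw [sum_chi (fun r => xor (w r) (σ r))]
  have hiff : ((fun r => xor (w r) (σ r)) = (fun _ => false)) ↔ w = σ := by
    rw [funext_iff, funext_iff]
    refine forall_congr' fun r => ?_
    cases hw : w r <;> cases hs : σ r <;> simp
  by_cases h : w = σ
  · rw [if_pos h, if_pos (hiff.mpr h)]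
    rw [inv_mul_cancel₀ (by positivity)]
  · rw [if_neg h, if_neg (fun hc => h (hiff.mp hc)), mul_zero]

lemma swap3 {Z G H : Type*} [Fintype Z] [Fintype G] [Fintype H] (F : Z → G → H → ℝ) :
    ∑ z : Z, ∑ g : G, ∑ h : H, F z g h = ∑ g : G, ∑ h : H, ∑ z : Z, F z g h :=
  (Finset.sum_comm).trans (Finset.sum_congr rfl fun _ _ => Finset.sum_comm)

/-- the support of `tᵀA` -/
def St {s n : ℕ} (A : Fin s → Fin n → Bool) (t : Fin s → Bool) : Finset (Fin n) :=
  Finset.univ.filter (fun i => rT A t i = true)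

lemma chi_as_bias {s n : ℕ} (A : Fin s → Fin n → Bool) (t : Fin s → Bool) (x : Fin n → Bool) :
    chi t (matVec A x) = ∏ i ∈ St A t, sg (x i) := by
  rw [chi_matVec, St, Finset.prod_filter]
  refine Finset.prod_congr rfl fun i _ => ?_
  cases rT A t i <;> simp [sg]

set_option maxHeartbeats 1000000 in
lemma dist_le_sum_bias {n s : ℕ} (A : Fin s → Fin n → Bool) (Q : BoxT n) (u v : Fin n → Bool)
    (hpos : ∀ x y u' v', 0 ≤ Q x y u' v') (hnorm : ∑ x, ∑ y, Q x y u v = 1) :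
    ∑ σ : Fin s → Bool, |(∑ x, ∑ y, if matVec A x = σ then Q x y u v else 0) - ((2:ℝ)^s)⁻¹|
      ≤ ∑ t ∈ (Finset.univ.erase (fun _ => false) : Finset (Fin s → Bool)),
          |bias (St A t) Q u v| := by
  classical
  set B : (Fin s → Bool) → ℝ := fun t => bias (St A t) Q u v with hB
  have hq : ∀ σ : Fin s → Bool,
      (∑ x, ∑ y, if matVec A x = σ then Q x y u v else 0)
        = ((2:ℝ)^s)⁻¹ * ∑ t, chi t σ * B t := by
    intro σ
    have h1 : ∀ (x y : Fin n → Bool),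
        (if matVec A x = σ then Q x y u v else 0)
        = ∑ t, ((2:ℝ)^s)⁻¹ * (chi t (matVec A x) * chi t σ * Q x y u v) := by
      intro x y
      have := indicator_eq (matVec A x) σ
      calc (if matVec A x = σ then Q x y u v else 0)
          = (if matVec A x = σ then (1:ℝ) else 0) * Q x y u v := by
            split_ifs <;> simp
        _ = (((2:ℝ)^s)⁻¹ * ∑ t, chi t (matVec A x) * chi t σ) * Q x y u v := by rw [this]
        _ = ∑ t, ((2:ℝ)^s)⁻¹ * (chi t (matVec A x) * chi t σ * Q x y u v) := by
            rw [mul_assoc, Finset.sum_mul, Finset.mul_sum]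
    simp only [h1]
    rw [← swap3 (fun t x y => ((2:ℝ)^s)⁻¹ * (chi t (matVec A x) * chi t σ * Q x y u v))]
    rw [Finset.mul_sum]
    refine Finset.sum_congr rfl fun t _ => ?_
    have e1 : ∀ x, (∑ y, ((2:ℝ)^s)⁻¹ * (chi t (matVec A x) * chi t σ * Q x y u v))
        = ((2:ℝ)^s)⁻¹ * chi t σ * ∑ y, chi t (matVec A x) * Q x y u v := by
      intro x
      rw [Finset.mul_sum]
      exact Finset.sum_congr rfl fun y _ => by ring
    simp only [e1]
    rw [← Finset.mul_sum]
    have e3 : ∑ x, ∑ y, chi t (matVec A x) * Q x y u v = B t := by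
      rw [hB]; unfold bias
      exact Finset.sum_congr rfl fun x _ => Finset.sum_congr rfl fun y _ => by
        rw [chi_as_bias]
    rw [e3]; ring
  have hB0 : B (fun _ => false) = 1 := by
    have hSt : St A (fun _ => false) = ∅ := by
      unfold St rT
      ext i; simp
    show bias (St A (fun _ => false)) Q u v = 1
    rw [hSt]; unfold bias
    simp only [Finset.prod_empty, one_mul]
    exact hnorm
  have hdiff : ∀ σ : Fin s → Bool,
      (∑ x, ∑ y, if matVec A x = σ then Q x y u v else 0) - ((2:ℝ)^s)⁻¹
      = ((2:ℝ)^s)⁻¹ * ∑ t ∈ Finset.univ.erase (fun _ => false), chi t σ * B t := by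
    intro σ
    rw [hq σ]
    have hsp : (∑ t, chi t σ * B t)
        = (∑ t ∈ Finset.univ.erase (fun _ => false), chi t σ * B t) + 1 := by
      rw [← Finset.sum_erase_add Finset.univ _ (Finset.mem_univ (fun _ => false)),
        hB0, chi_false, one_mul]
    rw [hsp, mul_add, mul_one]
    ring
  have habs : ∀ σ : Fin s → Bool,
      |(∑ x, ∑ y, if matVec A x = σ then Q x y u v else 0) - ((2:ℝ)^s)⁻¹|
      ≤ ((2:ℝ)^s)⁻¹ * ∑ t ∈ Finset.univ.erase (fun _ => false), |B t| := by
    intro σ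
    rw [hdiff σ, abs_mul, abs_of_pos (by positivity : (0:ℝ) < ((2:ℝ)^s)⁻¹)]
    refine mul_le_mul_of_nonneg_left ?_ (by positivity)
    refine (Finset.abs_sum_le_sum_abs _ _).trans ?_
    refine Finset.sum_le_sum fun t _ => ?_
    rw [abs_mul, abs_chi, one_mul]
  calc ∑ σ : Fin s → Bool,
        |(∑ x, ∑ y, if matVec A x = σ then Q x y u v else 0) - ((2:ℝ)^s)⁻¹|
      ≤ ∑ _σ : Fin s → Bool,
          ((2:ℝ)^s)⁻¹ * ∑ t ∈ Finset.univ.erase (fun _ => false), |B t| :=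
        Finset.sum_le_sum fun σ _ => habs σ
    _ = ∑ t ∈ Finset.univ.erase (fun _ => false), |B t| := by
        rw [Finset.sum_const, Finset.card_univ, Fintype.card_fun]
        simp only [Fintype.card_bool, Fintype.card_fin, nsmul_eq_mul]
        rw [Nat.cast_pow]
        push_cast
        rw [← mul_assoc, mul_inv_cancel₀ (by positivity), one_mul]


lemma z2_xor (a b : Bool) : z2 (xor a b) = z2 a + z2 b := by
  have h11 : (1 + 1 : ZMod 2) = 0 := by decide
  cases a <;> cases b <;> simp [z2, h11]

lemma z2_inj {a b : Bool} (h : z2 a = z2 b) : a = b := by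
  cases a <;> cases b
  · rfl
  · exact absurd h (by decide)
  · exact absurd h (by decide)
  · rfl

lemma rT_parity {s n : ℕ} (A : Fin s → Fin n → Bool) (t : Fin s → Bool) (i : Fin n) :
    z2 (rT A t i) = ∑ r, z2 (t r) * z2 (A r i) := z2_parity Finset.univ t (fun r => A r i)

set_option maxHeartbeats 1000000 in
lemma avg_A {n s : ℕ} (t : Fin s → Bool) (r0 : Fin s) (ht : t r0 = true)
    (f : (Fin n → Bool) → ℝ) :
    ∑ A : Fin s → Fin n → Bool, f (rT A t)
      = ((2:ℝ)^(n*(s-1))) * ∑ w : Fin n → Bool, f w := by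
  classical
  set gp : (Fin s → Fin n → Bool) → Fin n → Bool := fun A i =>
    decide ((((Finset.univ.erase r0)).filter fun r => (t r && A r i) = true).card % 2 = 1)
    with hgp
  set ψ : (Fin s → Fin n → Bool) → (Fin s → Fin n → Bool) := fun A =>
    Function.update A r0 (fun i => xor (A r0 i) (gp A i)) with hψ
  have hgp_z : ∀ A i, z2 (gp A i) = ∑ r ∈ Finset.univ.erase r0, z2 (t r) * z2 (A r i) :=
    fun A i => z2_parity (Finset.univ.erase r0) t (fun r => A r i)
  have hgp_psi : ∀ A, gp (ψ A) = gp A := by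
    intro A
    funext i
    have hfil : (Finset.univ.erase r0).filter (fun r => (t r && ψ A r i) = true)
        = (Finset.univ.erase r0).filter (fun r => (t r && A r i) = true) := by
      refine Finset.filter_congr fun r hr => ?_
      rw [hψ]
      simp [Function.update_of_ne (Finset.ne_of_mem_erase hr)]
    simp only [hgp]
    rw [hfil]
  have hinv : Function.Involutive ψ := by
    intro A
    have h1 : ψ (ψ A) = Function.update (ψ A) r0 (fun i => xor (ψ A r0 i) (gp (ψ A) i)) := rfl
    rw [h1, hgp_psi]
    have h2 : ψ A r0 = fun i => xor (A r0 i) (gp A i) := by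
      rw [hψ]; simp
    rw [h2]
    have h3 : (fun i => xor (xor (A r0 i) (gp A i)) (gp A i)) = A r0 := by
      funext i
      rw [Bool.xor_assoc, Bool.xor_self, Bool.xor_false]
    rw [h3, hψ]
    simp [Function.update_idem]
  have hrT : ∀ A, rT (ψ A) t = A r0 := by
    intro A
    funext i
    refine z2_inj ?_
    rw [rT_parity]
    have split : ∑ r, z2 (t r) * z2 (ψ A r i)
        = (∑ r ∈ Finset.univ.erase r0, z2 (t r) * z2 (ψ A r i))
          + z2 (t r0) * z2 (ψ A r0 i) :=
      (Finset.sum_erase_add Finset.univ _ (Finset.mem_univ r0)).symm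
    rw [split]
    have e1 : ∑ r ∈ Finset.univ.erase r0, z2 (t r) * z2 (ψ A r i)
        = ∑ r ∈ Finset.univ.erase r0, z2 (t r) * z2 (A r i) := by
      refine Finset.sum_congr rfl fun r hr => ?_
      rw [hψ]
      simp only [Function.update_of_ne (Finset.ne_of_mem_erase hr)]
    have e2 : z2 (ψ A r0 i) = z2 (A r0 i) + z2 (gp A i) := by
      rw [hψ]
      simp only [Function.update_self]
      exact z2_xor _ _
    rw [e1, e2, ht, hgp_z]
    have hxx : ∀ x : ZMod 2, x + x = 0 := by decide
    have h2 := hxx (∑ r ∈ Finset.univ.erase r0, z2 (t r) * z2 (A r i))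
    have hz1 : z2 true = 1 := rfl
    rw [hz1, one_mul]
    calc (∑ r ∈ Finset.univ.erase r0, z2 (t r) * z2 (A r i))
          + (z2 (A r0 i) + ∑ r ∈ Finset.univ.erase r0, z2 (t r) * z2 (A r i))
        = z2 (A r0 i) + ((∑ r ∈ Finset.univ.erase r0, z2 (t r) * z2 (A r i))
            + (∑ r ∈ Finset.univ.erase r0, z2 (t r) * z2 (A r i))) := by ring
      _ = z2 (A r0 i) := by rw [h2, add_zero]
  have step1 : ∑ A : Fin s → Fin n → Bool, f (rT A t)
      = ∑ A : Fin s → Fin n → Bool, f (A r0) := by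
    calc ∑ A : Fin s → Fin n → Bool, f (rT A t)
        = ∑ A : Fin s → Fin n → Bool, f (rT (ψ A) t) :=
          (Function.Bijective.sum_comp hinv.bijective (fun A => f (rT A t))).symm
      _ = ∑ A : Fin s → Fin n → Bool, f (A r0) :=
          Finset.sum_congr rfl fun A _ => by rw [hrT A]
  rw [step1, sum_split r0 (fun A => f (A r0))]
  have hins : ∀ (w : Fin n → Bool) (g : {r : Fin s // r ≠ r0} → (Fin n → Bool)),
      insF r0 w g r0 = w := fun w g => by simp [insF]
  simp only [hins]
  have : ∀ w : Fin n → Bool,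
      (∑ _g : {r : Fin s // r ≠ r0} → (Fin n → Bool), f w) = (2:ℝ)^(n*(s-1)) * f w := by
    intro w
    rw [Finset.sum_const, Finset.card_univ, nsmul_eq_mul]
    congr 1
    rw [Fintype.card_fun]
    have c1 : Fintype.card {r : Fin s // r ≠ r0} = s - 1 := by
      rw [Fintype.card_subtype_compl, Fintype.card_subtype_eq, Fintype.card_fin]
    have c2 : Fintype.card (Fin n → Bool) = 2^n := by
      rw [Fintype.card_fun, Fintype.card_bool, Fintype.card_fin]
    rw [c1, c2, ← pow_mul]
    push_cast
    ring
  simp only [this]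
  rw [← Finset.mul_sum]


lemma sum_supp_prod {n : ℕ} (c : Fin n → ℝ) :
    ∑ w : Fin n → Bool, ∏ i ∈ Finset.univ.filter (fun i => w i = true), c i
      = ∏ i, (1 + c i) := by
  classical
  have h1 : ∀ w : Fin n → Bool,
      (∏ i ∈ Finset.univ.filter (fun i => w i = true), c i)
        = ∏ i, (if w i = true then c i else 1) :=
    fun w => Finset.prod_filter _ _
  simp only [h1]
  have h2 : ∑ w : Fin n → Bool, ∏ i, (if w i = true then c i else 1)
      = ∏ i, ∑ b : Bool, (if b = true then c i else 1) := by
    rw [← Fintype.piFinset_univ]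
    exact (Finset.prod_univ_sum (fun _ => (Finset.univ : Finset Bool))
      (fun i b => if b = true then c i else 1)).symm
  rw [h2]
  refine Finset.prod_congr rfl fun i _ => ?_
  rw [Fintype.sum_bool]
  simp
  ring

set_option maxHeartbeats 1000000 in
/-- the `s`-bit key obtained from a uniformly random linear hash `A` of
Alice's outputs of `n` unbiased boxes has, on average over `A`, distance from uniform at
most `(1/2)·2^s·((1+4ε)/2)^n` against any non-signaling adversary. -/
theorem random_linear_hash_key_secure
    (n s : ℕ) (hn : 1 ≤ n) (hs : 1 ≤ s)
    (ε : Fin n → ℝ) (hε0 : ∀ i, 0 ≤ ε i) (hε1 : ∀ i, ε i ≤ 1/4)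
    (u v : Fin n → Bool)
    {Z : Type*} [Fintype Z]
    (p : (Fin s → Fin n → Bool) → Z → ℝ)
    (Pz : (Fin s → Fin n → Bool) → Z →
      (Fin n → Bool) → (Fin n → Bool) → (Fin n → Bool) → (Fin n → Bool) → ℝ)
    (hp : ∀ A z, 0 ≤ p A z) (hPz : ∀ A z, NSBox n (Pz A z))
    (hpart : ∀ A x y u' v', ∑ z, p A z * Pz A z x y u' v'
        = ∏ i, Peps (ε i) (x i) (y i) (u' i) (v' i)) :
    ((2:ℝ) ^ (s * n))⁻¹ * ∑ A : Fin s → Fin n → Bool,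
        (1/2) * ∑ σ : Fin s → Bool, ∑ z, p A z *
          |(∑ x, ∑ y, if matVec A x = σ then Pz A z x y u v else 0) - ((2:ℝ) ^ s)⁻¹|
      ≤ (1/2) * 2 ^ s * ((1 + 4 * ((∑ i, ε i) / n)) / 2) ^ n := by
  classical
  have hn0 : (0:ℝ) < (n:ℝ) := by exact_mod_cast hn
  -- partition bound
  have hF2 : ∀ (A : Fin s → Fin n → Bool) (S : Finset (Fin n)),
      ∑ z, p A z * |bias S (Pz A z) u v| ≤ ∏ i ∈ S, (4 * ε i) := by
    intro A S
    calc ∑ z, p A z * |bias S (Pz A z) u v|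
        ≤ ∑ z, p A z * lam S (Pz A z) u v := by
          refine Finset.sum_le_sum fun z _ => ?_
          refine mul_le_mul_of_nonneg_left ?_ (hp A z)
          exact xor_le_lam S u v (Pz A z)
            ⟨(hPz A z).1, (hPz A z).2.2.1, (hPz A z).2.2.2⟩
      _ = lam S (fun x y a b => ∑ z, p A z * Pz A z x y a b) u v := lam_mix S _ _ u v
      _ = lam S (fun x y a b => ∏ i, Peps (ε i) (x i) (y i) (a i) (b i)) u v :=
          lam_congr S u v fun x y a b => hpart A x y a b
      _ = ∏ i ∈ S, (4 * ε i) := lam_prod S ε u v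
  -- per-A bound
  have hper : ∀ A : Fin s → Fin n → Bool,
      (∑ σ : Fin s → Bool, ∑ z, p A z *
          |(∑ x, ∑ y, if matVec A x = σ then Pz A z x y u v else 0) - ((2:ℝ) ^ s)⁻¹|)
      ≤ ∑ t ∈ (Finset.univ.erase (fun _ => false) : Finset (Fin s → Bool)),
          ∏ i ∈ St A t, (4 * ε i) := by
    intro A
    rw [Finset.sum_comm]
    calc ∑ z, ∑ σ : Fin s → Bool, p A z *
          |(∑ x, ∑ y, if matVec A x = σ then Pz A z x y u v else 0) - ((2:ℝ) ^ s)⁻¹|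
        ≤ ∑ z, p A z * ∑ t ∈ (Finset.univ.erase (fun _ => false) : Finset (Fin s → Bool)),
            |bias (St A t) (Pz A z) u v| := by
          refine Finset.sum_le_sum fun z _ => ?_
          rw [← Finset.mul_sum]
          refine mul_le_mul_of_nonneg_left ?_ (hp A z)
          exact dist_le_sum_bias A (Pz A z) u v (hPz A z).1 ((hPz A z).2.1 u v)
      _ = ∑ t ∈ (Finset.univ.erase (fun _ => false) : Finset (Fin s → Bool)),
            ∑ z, p A z * |bias (St A t) (Pz A z) u v| := by
          rw [← Finset.sum_comm]
          exact Finset.sum_congr rfl fun z _ => Finset.mul_sum _ _ _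
      _ ≤ ∑ t ∈ (Finset.univ.erase (fun _ => false) : Finset (Fin s → Bool)),
            ∏ i ∈ St A t, (4 * ε i) :=
          Finset.sum_le_sum fun t _ => hF2 A (St A t)
  -- sum over A
  have hsumA : ∑ A : Fin s → Fin n → Bool,
      (∑ t ∈ (Finset.univ.erase (fun _ => false) : Finset (Fin s → Bool)),
          ∏ i ∈ St A t, (4 * ε i))
      = ((2:ℝ)^s - 1) * ((2:ℝ)^(n*(s-1)) * ∏ i, (1 + 4 * ε i)) := by
    rw [Finset.sum_comm]
    have hone : ∀ t ∈ (Finset.univ.erase (fun _ => false) : Finset (Fin s → Bool)),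
        (∑ A : Fin s → Fin n → Bool, ∏ i ∈ St A t, (4 * ε i))
        = (2:ℝ)^(n*(s-1)) * ∏ i, (1 + 4 * ε i) := by
      intro t ht
      have htne : t ≠ (fun _ => false) := (Finset.mem_erase.mp ht).1
      have : ∃ r0, t r0 = true := by
        by_contra hc
        push_neg at hc
        exact htne (funext fun r => by simpa using hc r)
      obtain ⟨r0, hr0⟩ := this
      have := avg_A t r0 hr0
        (fun w => ∏ i ∈ Finset.univ.filter (fun i => w i = true), (4 * ε i))
      rw [show (∑ A : Fin s → Fin n → Bool, ∏ i ∈ St A t, (4 * ε i))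
          = ∑ A : Fin s → Fin n → Bool,
              ∏ i ∈ Finset.univ.filter (fun i => rT A t i = true), (4 * ε i) from rfl]
      rw [this, sum_supp_prod (fun i => 4 * ε i)]
    rw [Finset.sum_congr rfl hone, Finset.sum_const, nsmul_eq_mul]
    congr 1
    rw [Finset.card_erase_of_mem (Finset.mem_univ _), Finset.card_univ, Fintype.card_fun]
    simp only [Fintype.card_bool, Fintype.card_fin]
    have h1 : (1:ℕ) ≤ 2^s := Nat.one_le_two_pow
    push_cast [h1]
    ring
  -- AM-GM
  have hz : ∀ i : Fin n, (0:ℝ) ≤ (1 + 4 * ε i)/2 := fun i => by nlinarith [hε0 i]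
  have hAM : (∏ i, ((1 + 4 * ε i)/2)) ≤ ((1 + 4 * ((∑ i, ε i) / n)) / 2) ^ n := by
    have hw' : ∑ _i : Fin n, (1/(n:ℝ)) = 1 := by
      rw [Finset.sum_const, Finset.card_univ, Fintype.card_fin, nsmul_eq_mul]
      field_simp
    have h := Real.geom_mean_le_arith_mean_weighted Finset.univ (fun _ => 1/(n:ℝ))
      (fun i => (1 + 4 * ε i)/2) (fun i _ => by positivity) hw' (fun i _ => hz i)
    have hsum : ∑ i, (1/(n:ℝ)) * ((1 + 4 * ε i)/2) = (1 + 4 * ((∑ i, ε i) / n)) / 2 := by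
      have e1 : ∑ i, (1/(n:ℝ)) * ((1 + 4 * ε i)/2)
          = (1/(n:ℝ)) * (1/2) * ∑ i, (1 + 4 * ε i) := by
        rw [Finset.mul_sum]
        exact Finset.sum_congr rfl fun i _ => by ring
      rw [e1, Finset.sum_add_distrib, Finset.sum_const, Finset.card_univ, Fintype.card_fin,
        nsmul_eq_mul, ← Finset.mul_sum]
      field_simp
    rw [hsum] at h
    have hgeo_nonneg : 0 ≤ ∏ i, ((1 + 4 * ε i)/2) ^ (1/(n:ℝ)) :=
      Finset.prod_nonneg fun i _ => Real.rpow_nonneg (hz i) _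
    have hpow := pow_le_pow_left₀ hgeo_nonneg h n
    have hid : (∏ i, ((1 + 4 * ε i)/2) ^ (1/(n:ℝ)))^n = ∏ i, ((1 + 4 * ε i)/2) := by
      rw [← Finset.prod_pow]
      refine Finset.prod_congr rfl fun i _ => ?_
      rw [← Real.rpow_natCast (((1 + 4 * ε i)/2) ^ (1/(n:ℝ))) n,
        ← Real.rpow_mul (hz i), one_div, inv_mul_cancel₀ (ne_of_gt hn0), Real.rpow_one]
    rw [hid] at hpow
    exact hpow
  -- final numeric assembly
  have hKnonneg : (0:ℝ) ≤ ∏ i, (1 + 4 * ε i) :=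
    Finset.prod_nonneg fun i _ => by nlinarith [hε0 i]
  have hprodsplit : ((2:ℝ)^(s*n))⁻¹ * ((2:ℝ)^(n*(s-1)) * ∏ i, (1 + 4 * ε i))
      = ∏ i, ((1 + 4 * ε i)/2) := by
    have hexp : n*(s-1) + n = s*n := by
      have : s - 1 + 1 = s := Nat.succ_pred_eq_of_pos hs
      calc n*(s-1) + n = n * (s - 1 + 1) := by ring
        _ = n * s := by rw [this]
        _ = s * n := by ring
    have h2 : (2:ℝ)^(s*n) = (2:ℝ)^(n*(s-1)) * (2:ℝ)^n := by
      rw [← pow_add, hexp]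
    rw [h2]
    rw [Finset.prod_div_distrib, Finset.prod_const, Finset.card_univ, Fintype.card_fin]
    field_simp
  calc ((2:ℝ) ^ (s * n))⁻¹ * ∑ A : Fin s → Fin n → Bool,
        (1/2) * ∑ σ : Fin s → Bool, ∑ z, p A z *
          |(∑ x, ∑ y, if matVec A x = σ then Pz A z x y u v else 0) - ((2:ℝ) ^ s)⁻¹|
      ≤ ((2:ℝ) ^ (s * n))⁻¹ * ∑ A : Fin s → Fin n → Bool,
        (1/2) * ∑ t ∈ (Finset.univ.erase (fun _ => false) : Finset (Fin s → Bool)),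
          ∏ i ∈ St A t, (4 * ε i) := by
        refine mul_le_mul_of_nonneg_left ?_ (by positivity)
        refine Finset.sum_le_sum fun A _ => ?_
        refine mul_le_mul_of_nonneg_left (hper A) (by norm_num)
    _ = ((2:ℝ) ^ (s * n))⁻¹ * ((1/2) * (((2:ℝ)^s - 1)
          * ((2:ℝ)^(n*(s-1)) * ∏ i, (1 + 4 * ε i)))) := by
        rw [← Finset.mul_sum, hsumA]
    _ = (1/2) * ((2:ℝ)^s - 1) * ∏ i, ((1 + 4 * ε i)/2) := by
        rw [← hprodsplit]
        ring
    _ ≤ (1/2) * 2 ^ s * ((1 + 4 * ((∑ i, ε i) / n)) / 2) ^ n := by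
        have hprod_nonneg : (0:ℝ) ≤ ∏ i, ((1 + 4 * ε i)/2) :=
          Finset.prod_nonneg fun i _ => hz i
        have h2s : (2:ℝ)^s - 1 ≤ (2:ℝ)^s := by norm_num
        have hm_nonneg : (0:ℝ) ≤ ((1 + 4 * ((∑ i, ε i) / n)) / 2) ^ n :=
          le_trans hprod_nonneg hAM
        nlinarith [hAM, hprod_nonneg, pow_pos (show (0:ℝ) < 2 by norm_num) s]
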